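/- The circumcenter of mass is translation-equivariant: if every vertex of a polygon P is translated by a vector w, then the point given by the formula CCM(P) = (1/(4A(P))) · ( Σi yi(x_{i-1}²+y_{i-1}²−x_{i+1}²−y_{i+1}²), −Σi xi(x_{i-1}²+y_{i-1}²−x_{i+1}²−y_{i+1}²) ) is translated by the same vector w. -/

import Mathlib

open Finset

/-- Squared norm of a plane vector. -/
noncomputable def nsq (v : ℝ × ℝ) : ℝ := v.1 ^ 2 + v.2 ^ 2

/-- Signed area of the closed polygon with vertices `V i`, indices mod `n`. -/
noncomputable def polyArea {n : ℕ} [NeZero n] (V : ZMod n → ℝ × ℝ) : ℝ :=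
  (∑ i, ((V i).1 * (V (i + 1)).2 - (V (i + 1)).1 * (V i).2)) / 2

/-- The coordinate formula for the circumcenter of mass of a polygon. -/
noncomputable def ccmF {n : ℕ} [NeZero n] (V : ZMod n → ℝ × ℝ) : ℝ × ℝ :=
  (4 * polyArea V)⁻¹ •
    ((∑ i, (V i).2 * (nsq (V (i - 1)) - nsq (V (i + 1)))),
     (∑ i, -(V i).1 * (nsq (V (i - 1)) - nsq (V (i + 1)))))

/-! Since `|V j + w|² = |V j|² + 2⟨V j, w⟩ + |w|²`, translating the polygon changes the numerator of
`ccmF` only by sums `∑ u i * (f (i - 1) - f (i + 1))` with `u, f` coordinate functions of `V` or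
constants. Cyclic central differences sum to zero, summation by parts makes such a sum
antisymmetric in `u, f`, and `∑ y i * (x (i - 1) - x (i + 1)) = 2A`. Hence the numerator moves by
`4A • w` while the area `A` is unchanged. -/

def cyclicDiff {n : ℕ} {M : Type*} [AddGroup M] (f : ZMod n → M) (i : ZMod n) : M :=
  f (i - 1) - f (i + 1)

theorem cyclicDiff_add_const {n : ℕ} {M : Type*} [AddCommGroup M] (f : ZMod n → M) (c : M) :
    cyclicDiff (fun i => f i + c) = cyclicDiff f :=
  funext fun _ => add_sub_add_right_eq_sub _ _ _

section CyclicSums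

variable {n : ℕ} [NeZero n]

theorem sum_cyclicDiff {M : Type*} [AddCommGroup M] (f : ZMod n → M) :
    ∑ i, cyclicDiff f i = 0 := by
  simp only [cyclicDiff]
  rw [sum_sub_distrib, Fintype.sum_equiv (Equiv.subRight 1) (fun i => f (i - 1)) f fun _ => rfl,
    Fintype.sum_equiv (Equiv.addRight 1) (fun i => f (i + 1)) f fun _ => rfl, sub_self]

theorem sum_mul_comp_sub_one {R : Type*} [NonUnitalNonAssocSemiring R] (f g : ZMod n → R) :
    ∑ i, f i * g (i - 1) = ∑ i, f (i + 1) * g i :=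
  Fintype.sum_equiv (Equiv.subRight 1) _ _ fun i => by simp

theorem sum_mul_cyclicDiff_comm {R : Type*} [CommRing R] (f g : ZMod n → R) :
    ∑ i, f i * cyclicDiff g i = -∑ i, g i * cyclicDiff f i := by
  simp only [cyclicDiff, mul_sub, sum_sub_distrib]
  rw [sum_mul_comp_sub_one f g, sum_mul_comp_sub_one g f]
  simp only [mul_comm (g _)]
  abel

theorem sum_mul_cyclicDiff_self {R : Type*} [CommRing R] (f : ZMod n → R) :
    ∑ i, f i * cyclicDiff f i = 0 := by
  simp only [cyclicDiff, mul_sub, sum_sub_distrib]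
  rw [sum_mul_comp_sub_one]
  simp only [mul_comm (f (_ + 1))]
  exact sub_self _

end CyclicSums

section Polygon

variable {n : ℕ} [NeZero n]

theorem two_mul_polyArea (V : ZMod n → ℝ × ℝ) :
    2 * polyArea V = ∑ i, (V i).2 * cyclicDiff (Prod.fst ∘ V) i := by
  simp only [cyclicDiff, mul_sub, sum_sub_distrib]
  rw [sum_mul_comp_sub_one (fun i => (V i).2) (Prod.fst ∘ V)]
  simp only [polyArea, Function.comp_apply, sum_sub_distrib, mul_comm (V _).2]
  ring

theorem polyArea_add_const (V : ZMod n → ℝ × ℝ) (w : ℝ × ℝ) :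
    polyArea (fun i => V i + w) = polyArea V := by
  apply mul_left_cancel₀ (two_ne_zero' ℝ)
  simp only [two_mul_polyArea, Function.comp_def, Prod.fst_add, Prod.snd_add, cyclicDiff_add_const,
    add_mul, sum_add_distrib, ← mul_sum, sum_cyclicDiff, mul_zero, add_zero]

theorem sum_mul_cyclicDiff_nsq_add (V : ZMod n → ℝ × ℝ) (w : ℝ × ℝ) (u : ZMod n → ℝ) (c : ℝ) :
    ∑ i, (u i + c) * cyclicDiff (fun j => nsq (V j + w)) i =
      ∑ i, u i * cyclicDiff (fun j => nsq (V j)) i +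
        2 * (w.1 * ∑ i, u i * cyclicDiff (Prod.fst ∘ V) i +
          w.2 * ∑ i, u i * cyclicDiff (Prod.snd ∘ V) i) := by
  have hdiff (i : ZMod n) : cyclicDiff (fun j => nsq (V j + w)) i =
      cyclicDiff (fun j => nsq (V j)) i +
        2 * (w.1 * cyclicDiff (Prod.fst ∘ V) i + w.2 * cyclicDiff (Prod.snd ∘ V) i) := by
    simp only [cyclicDiff, nsq, Function.comp_apply, Prod.fst_add, Prod.snd_add]
    ring
  calc ∑ i, (u i + c) * cyclicDiff (fun j => nsq (V j + w)) i
      = ∑ i, u i * cyclicDiff (fun j => nsq (V j + w)) i +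
          c * ∑ i, cyclicDiff (fun j => nsq (V j + w)) i := by
        simp only [add_mul, sum_add_distrib, mul_sum]
    _ = ∑ i, (u i * cyclicDiff (fun j => nsq (V j)) i +
          2 * w.1 * (u i * cyclicDiff (Prod.fst ∘ V) i) +
          2 * w.2 * (u i * cyclicDiff (Prod.snd ∘ V) i)) := by
        rw [sum_cyclicDiff, mul_zero, add_zero]
        exact sum_congr rfl fun i _ => by rw [hdiff]; ring
    _ = _ := by
        simp only [sum_add_distrib, ← mul_sum]
        ring

noncomputable def ccmNum (V : ZMod n → ℝ × ℝ) : ℝ × ℝ :=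
  (∑ i, (V i).2 * cyclicDiff (fun j => nsq (V j)) i,
    ∑ i, -(V i).1 * cyclicDiff (fun j => nsq (V j)) i)

theorem ccmF_eq_smul_ccmNum (V : ZMod n → ℝ × ℝ) : ccmF V = (4 * polyArea V)⁻¹ • ccmNum V :=
  rfl

theorem ccmNum_add_const (V : ZMod n → ℝ × ℝ) (w : ℝ × ℝ) :
    ccmNum (fun i => V i + w) = ccmNum V + (4 * polyArea V) • w := by
  have hyx : ∑ i, (V i).2 * cyclicDiff (Prod.fst ∘ V) i = 2 * polyArea V :=
    (two_mul_polyArea V).symm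
  have hyy : ∑ i, (V i).2 * cyclicDiff (Prod.snd ∘ V) i = 0 :=
    sum_mul_cyclicDiff_self (Prod.snd ∘ V)
  have hxx : ∑ i, -(V i).1 * cyclicDiff (Prod.fst ∘ V) i = 0 := by
    simp only [neg_mul, sum_neg_distrib, neg_eq_zero]
    exact sum_mul_cyclicDiff_self (Prod.fst ∘ V)
  have hxy : ∑ i, -(V i).1 * cyclicDiff (Prod.snd ∘ V) i = 2 * polyArea V := by
    simp only [two_mul_polyArea, neg_mul, sum_neg_distrib]
    exact neg_eq_iff_eq_neg.mpr (sum_mul_cyclicDiff_comm (Prod.fst ∘ V) (Prod.snd ∘ V))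
  have hfst := sum_mul_cyclicDiff_nsq_add V w (fun i => (V i).2) w.2
  have hsnd := sum_mul_cyclicDiff_nsq_add V w (fun i => -(V i).1) (-w.1)
  rw [hyx, hyy] at hfst
  rw [hxx, hxy] at hsnd
  refine Prod.ext ?_ ?_
  · simp only [ccmNum, Prod.fst_add, Prod.snd_add, Prod.smul_fst, smul_eq_mul]
    linear_combination hfst
  · simp only [ccmNum, Prod.fst_add, Prod.snd_add, Prod.smul_snd, smul_eq_mul, neg_add]
    linear_combination hsnd

end Polygon

theorem stmt3 (n : ℕ) [NeZero n] (V : ZMod n → ℝ × ℝ) (w : ℝ × ℝ)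
    (hA : polyArea V ≠ 0) :
    ccmF (fun i => V i + w) = ccmF V + w := by
  rw [ccmF_eq_smul_ccmNum, ccmF_eq_smul_ccmNum, ccmNum_add_const, polyArea_add_const, smul_add,
    inv_smul_smul₀ (mul_ne_zero four_ne_zero hA)]
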